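/- Let d ≥ 2 and let C_d be the matroid on a d-element ground set whose independent sets are exactly the proper subsets of the ground set (equivalently, the uniform matroid U_{d−1,d}, whose unique circuit is the whole ground set). Then in every depth-decomposition (T, f) of C_d, the root of T has exactly one child. -/

import Mathlib

/-!
The rank of `M` is `d - 1`, the number of non-root vertices, so the paths from the root to
the images of the elements cover every non-root vertex. If the root had two children `c ≠ c'`,
split the ground set into the set `X` of elements mapped into the subtree of `c` and its
complement: their root paths lie in the subtree of `c` and outside it respectively, so
`r(X) + r(E \ X) ≤ d - 1`. Both parts are nonempty (they meet the subtrees of `c` and `c'`),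
hence proper subsets of the unique circuit `E`, hence independent, and the left side is `d`.
-/

/-- `u` is an ancestor of `v` (or equal to it) in the rooted tree encoded by `parent`. -/
def Anc {V : Type} (parent : V → V) (u v : V) : Prop := ∃ n : ℕ, parent^[n] v = u

/-- `(root, parent)` encodes a rooted tree: the root is its own parent and every
vertex reaches the root by iterating `parent` (each non-root vertex is joined to its
parent by an edge). -/
def IsRootedTree {V : Type} (root : V) (parent : V → V) : Prop :=
  parent root = root ∧ ∀ v : V, ∃ n : ℕ, parent^[n] v = root

/-- The depth of a vertex in a rooted tree: the number of edges on the path from the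
root to the vertex. -/
noncomputable def vdepth {V : Type} (root : V) (parent : V → V) (v : V) : ℕ :=
  sInf {n : ℕ | parent^[n] v = root}

/-- The depth of a rooted tree: the maximum number of edges on a path from the root
to a leaf, i.e. the maximal depth of a vertex. -/
noncomputable def treeDepth {V : Type} (root : V) (parent : V → V) : ℕ :=
  sSup (Set.range (vdepth root parent))

/-- A leaf of a rooted tree: a vertex that is the parent of no other vertex. -/
def IsLeaf {V : Type} (parent : V → V) (v : V) : Prop := ∀ u : V, u ≠ v → parent u ≠ v

/-- The rank of a set `X` in a matroid `M`: the largest size of an independent subset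
of `X`. -/
noncomputable def mrank {α : Type} (M : Matroid α) (X : Set α) : ℕ :=
  sSup {n : ℕ | ∃ I : Set α, I ⊆ X ∧ M.Indep I ∧ I.ncard = n}

/-- `(root, parent, f)` is a depth-decomposition of the matroid `M`: the tree is finite,
the rank of `M` equals the number of edges of the tree (one edge per non-root vertex),
and the rank of any `X ⊆ M.E` is at most the number of edges of the union `T*(X)` of
the paths from the root to the vertices of `f(X)` (one edge per non-root vertex that is
an ancestor of, or equal to, some vertex of `f(X)`). -/
def IsDepthDecomp {α V : Type} (M : Matroid α) (root : V) (parent : V → V)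
    (f : α → V) : Prop :=
  Finite V ∧ IsRootedTree root parent ∧
  mrank M M.E = Set.ncard {v : V | v ≠ root} ∧
  ∀ X : Set α, X ⊆ M.E →
    mrank M X ≤ Set.ncard {v : V | v ≠ root ∧ ∃ e ∈ X, Anc parent v (f e)}

/-- `M` has a depth-decomposition of depth at most `d`. -/
def HasDepthDecompOfDepthLE {α : Type} (M : Matroid α) (d : ℕ) : Prop :=
  ∃ (V : Type) (root : V) (parent : V → V) (f : α → V),
    IsDepthDecomp M root parent f ∧ treeDepth root parent ≤ d

/-- The branch-depth of a matroid: the smallest depth of a depth-decomposition. -/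
noncomputable def branchDepth {α : Type} (M : Matroid α) : ℕ :=
  sInf {d : ℕ | HasDepthDecompOfDepthLE M d}

/-- A circuit of a matroid: a minimal dependent set. -/
def IsCircuitOf {α : Type} (M : Matroid α) (C : Set α) : Prop :=
  M.Dep C ∧ ∀ D : Set α, M.Dep D → D ⊆ C → D = C

/-- `N` is the contraction `M / F` of the matroid `M` by the set `F`: the ground set of
`N` is `M.E \ F`, and a set `I` disjoint from `F` is independent in `N` if and only if
`r(F ∪ I) = r(F) + |I|`. -/
def IsContractionBy {α : Type} (M : Matroid α) (F : Set α) (N : Matroid α) : Prop :=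
  N.E = M.E \ F ∧
  ∀ I : Set α, N.Indep I ↔
    I ⊆ M.E \ F ∧ I.Finite ∧ mrank M (F ∪ I) = mrank M F + I.ncard

/-- A matroid is connected if its ground set is nonempty and any two distinct elements
lie in a common circuit. -/
def IsConnectedM {α : Type} (M : Matroid α) : Prop :=
  M.E.Nonempty ∧
  ∀ x ∈ M.E, ∀ y ∈ M.E, x = y ∨ ∃ C : Set α, IsCircuitOf M C ∧ x ∈ C ∧ y ∈ C

/-- A component of a matroid: an equivalence class of the relation "equal or lying in a
common circuit" on the ground set. -/
def IsComponentOf {α : Type} (M : Matroid α) (K : Set α) : Prop :=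
  ∃ x ∈ M.E,
    K = {y ∈ M.E | x = y ∨ ∃ C : Set α, IsCircuitOf M C ∧ x ∈ C ∧ y ∈ C}

namespace Anc

variable {V : Type} {p : V → V} {r c u v w : V}

lemma rfl : Anc p v v := ⟨0, Function.iterate_zero_apply p v⟩

lemma trans (hwu : Anc p w u) (huv : Anc p u v) : Anc p w v := by
  obtain ⟨n, rfl⟩ := huv
  obtain ⟨m, rfl⟩ := hwu
  exact ⟨m + n, Function.iterate_add_apply p m n v⟩

lemma eq_of_fixed (hr : p r = r) (h : Anc p v r) : v = r := by
  obtain ⟨n, rfl⟩ := h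
  exact Function.iterate_fixed hr n

lemma total (hu : Anc p u v) (hw : Anc p w v) : Anc p u w ∨ Anc p w u := by
  obtain ⟨n, rfl⟩ := hu
  obtain ⟨m, rfl⟩ := hw
  rcases le_total n m with hnm | hmn
  · exact Or.inr ⟨m - n, by rw [← Function.iterate_add_apply, Nat.sub_add_cancel hnm]⟩
  · exact Or.inl ⟨n - m, by rw [← Function.iterate_add_apply, Nat.sub_add_cancel hmn]⟩

lemma eq_or_eq_of_parent_eq (hr : p r = r) (hc : p c = r) (h : Anc p v c) :
    v = c ∨ v = r := by
  obtain ⟨_ | n, rfl⟩ := h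
  · exact Or.inl _root_.rfl
  · rw [Function.iterate_succ_apply, hc, Function.iterate_fixed hr]
    exact Or.inr _root_.rfl

lemma not_anc_of_anc_of_parent_eq {c' : V} (hr : p r = r) (hc : p c = r) (hc' : p c' = r)
    (hcr : c ≠ r) (hc'r : c' ≠ r) (hne : c ≠ c') (h : Anc p c w) : ¬Anc p c' w := by
  intro h'
  rcases h.total h' with hcc' | hc'c
  · exact (eq_or_eq_of_parent_eq hr hc' hcc').elim hne hcr
  · exact (eq_or_eq_of_parent_eq hr hc hc'c).elim (Ne.symm hne) hc'r

end Anc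

lemma IsRootedTree.exists_child_anc {V : Type} {root : V} {p : V → V}
    (ht : IsRootedTree root p) {v : V} (hv : v ≠ root) :
    ∃ c : V, c ≠ root ∧ p c = root ∧ Anc p c v := by
  classical
  have hreach := ht.2 v
  have hn : Nat.find hreach ≠ 0 := fun h0 => hv (by simpa [h0] using Nat.find_spec hreach)
  obtain ⟨n, hn'⟩ := Nat.exists_eq_succ_of_ne_zero hn
  refine ⟨p^[n] v, Nat.find_min hreach (by omega), ?_, ⟨n, rfl⟩⟩
  rw [← Function.iterate_succ_apply' p n v, ← hn']
  exact Nat.find_spec hreach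

section MatroidRank

variable {α : Type} {M : Matroid α} {X I : Set α}

lemma mrank_le_of_forall_indep {n : ℕ} (h : ∀ I ⊆ X, M.Indep I → I.ncard ≤ n) :
    mrank M X ≤ n :=
  csSup_le ⟨0, ∅, Set.empty_subset X, M.empty_indep, Set.ncard_empty α⟩
    (by rintro _ ⟨I, hIX, hI, rfl⟩; exact h I hIX hI)

lemma ncard_le_mrank (hX : X.Finite) (hIX : I ⊆ X) (hI : M.Indep I) : I.ncard ≤ mrank M X :=
  le_csSup ⟨X.ncard, by rintro _ ⟨J, hJX, -, rfl⟩; exact Set.ncard_le_ncard hJX hX⟩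
    ⟨I, hIX, hI, rfl⟩

lemma mrank_eq_ncard_of_indep (hX : X.Finite) (hI : M.Indep X) : mrank M X = X.ncard :=
  (mrank_le_of_forall_indep fun _ hIX _ => Set.ncard_le_ncard hIX hX).antisymm
    (ncard_le_mrank hX subset_rfl hI)

lemma mrank_ground_of_indep_iff_ssubset (hE : M.E.Finite) (hne : M.E.Nonempty)
    (hI : ∀ I : Set α, M.Indep I ↔ I ⊂ M.E) : mrank M M.E = M.E.ncard - 1 := by
  obtain ⟨x, hx⟩ := hne
  refine le_antisymm (mrank_le_of_forall_indep fun I _ hind => ?_) ?_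
  · have := Set.ncard_lt_ncard ((hI I).1 hind) hE
    omega
  · rw [← Set.ncard_sdiff_singleton_of_mem hx]
    exact ncard_le_mrank hE Set.sdiff_subset ((hI _).2 (Set.sdiff_singleton_ssubset.2 hx))

end MatroidRank

section DepthDecomp

variable {α V : Type} {M : Matroid α} {root : V} {parent : V → V} {f : α → V}

/-- The non-root vertices of `T*(X)`, one for each of its edges. -/
def pathEdges (root : V) (parent : V → V) (f : α → V) (X : Set α) : Set V :=
  {v : V | v ≠ root ∧ ∃ e ∈ X, Anc parent v (f e)}

lemma IsDepthDecomp.mrank_le (h : IsDepthDecomp M root parent f) {X : Set α}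
    (hX : X ⊆ M.E) : mrank M X ≤ (pathEdges root parent f X).ncard :=
  h.2.2.2 X hX

lemma IsDepthDecomp.pathEdges_ground (h : IsDepthDecomp M root parent f) :
    pathEdges root parent f M.E = {v : V | v ≠ root} := by
  have := h.1
  refine Set.eq_of_subset_of_ncard_le (fun v hv => hv.1) ?_
  rw [← h.2.2.1]
  exact h.mrank_le subset_rfl

lemma IsDepthDecomp.exists_anc_image (h : IsDepthDecomp M root parent f) {v : V}
    (hv : v ≠ root) : ∃ e ∈ M.E, Anc parent v (f e) :=
  (h.pathEdges_ground.symm ▸ hv : v ∈ pathEdges root parent f M.E).2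

lemma IsDepthDecomp.mrank_add_mrank_sdiff_le (h : IsDepthDecomp M root parent f) {c : V}
    (hc : parent c = root) (hcr : c ≠ root) :
    mrank M {e ∈ M.E | Anc parent c (f e)} + mrank M (M.E \ {e ∈ M.E | Anc parent c (f e)})
      ≤ mrank M M.E := by
  have := h.1
  have hroot := h.2.1.1
  set S : Set V := {v | Anc parent c v}
  have hS : S ⊆ {v | v ≠ root} := fun v hv hvr => hcr (Anc.eq_of_fixed hroot (hvr ▸ hv))
  have hin : pathEdges root parent f {e ∈ M.E | Anc parent c (f e)} ⊆ S := by
    rintro v ⟨hvr, e, ⟨-, hce⟩, hve⟩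
    rcases hve.total hce with hvc | hcv
    · exact (Anc.eq_or_eq_of_parent_eq hroot hc hvc).elim (· ▸ Anc.rfl) (absurd · hvr)
    · exact hcv
  have hout : pathEdges root parent f (M.E \ {e ∈ M.E | Anc parent c (f e)})
      ⊆ {v | v ≠ root} \ S :=
    fun v ⟨hvr, e, ⟨he, hce⟩, hve⟩ => ⟨hvr, fun hcv => hce ⟨he, hcv.trans hve⟩⟩
  calc _ ≤ S.ncard + ({v | v ≠ root} \ S).ncard :=
        add_le_add ((h.mrank_le fun _ he => he.1).trans (Set.ncard_le_ncard hin))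
          ((h.mrank_le Set.sdiff_subset).trans (Set.ncard_le_ncard hout))
    _ = mrank M M.E := by rw [h.2.2.1, add_comm, Set.ncard_sdiff_add_ncard_of_subset hS]

end DepthDecomp

/-- Let `d ≥ 2` and let `M` be the matroid on a `d`-element ground set
whose independent sets are exactly the proper subsets of the ground set (the uniform
matroid `U_{d-1,d}`). Then in every depth-decomposition of `M` the root has exactly one
child. -/
theorem root_has_unique_child_of_circuit_matroid {α V : Type} (M : Matroid α)
    (d : ℕ) (hd : 2 ≤ d) (hfin : M.E.Finite) (hcard : M.E.ncard = d)
    (hI : ∀ I : Set α, M.Indep I ↔ I ⊂ M.E)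
    (root : V) (parent : V → V) (f : α → V)
    (h : IsDepthDecomp M root parent f) :
    ∃! v : V, v ≠ root ∧ parent v = root := by
  have := h.1
  have hrank : mrank M M.E = d - 1 := by
    rw [← hcard]
    exact mrank_ground_of_indep_iff_ssubset hfin ((Set.ncard_pos hfin).1 (by omega)) hI
  obtain ⟨v, hv⟩ : {v : V | v ≠ root}.Nonempty := by
    rw [← Set.ncard_pos, ← h.2.2.1]
    omega
  obtain ⟨c, hcr, hc, -⟩ := h.2.1.exists_child_anc hv
  refine ⟨c, ⟨hcr, hc⟩, fun c' ⟨hc'r, hc'⟩ => by_contra fun hne => ?_⟩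
  set X := {e ∈ M.E | Anc parent c (f e)}
  obtain ⟨e, he, hce⟩ := h.exists_anc_image hcr
  obtain ⟨e', he', hce'⟩ := h.exists_anc_image hc'r
  have hXE : X ⊂ M.E := Set.ssubset_iff_of_subset (fun _ hx => hx.1) |>.2
    ⟨e', he', fun hX => Anc.not_anc_of_anc_of_parent_eq h.2.1.1 hc hc' hcr hc'r (Ne.symm hne)
      hX.2 hce'⟩
  have hXcE : M.E \ X ⊂ M.E := Set.sdiff_ssubset_left_iff.2 ⟨e, he, he, hce⟩
  have hsep := h.mrank_add_mrank_sdiff_le hc hcr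
  rw [mrank_eq_ncard_of_indep (hfin.subset hXE.1) ((hI X).2 hXE),
    mrank_eq_ncard_of_indep (hfin.subset hXcE.1) ((hI _).2 hXcE),
    add_comm, Set.ncard_sdiff_add_ncard_of_subset hXE.1 hfin] at hsep
  omega
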